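/- Let A be an n×n real positive semidefinite matrix and y ∈ ℝⁿ a vector orthogonal to the kernel of A. Then yᵀA†y = inf{λ² : λ > 0 and |yᵀu|² ≤ λ²·(uᵀAu) for all u ∈ ℝⁿ}, where A† is the Moore–Penrose pseudoinverse of A. -/

import Mathlib

/-!
Put `x = B y`. The first and third Penrose conditions make `A B` a symmetric idempotent fixing
the range of `A`, so `y - A B y` lies in `ker Aᵀ = ker A` and is orthogonal to itself: `A x = y`.
Then `yᵀ B y = xᵀ A x`, and Cauchy–Schwarz for the semi-inner product `⟨u, v⟩ = uᵀ A v` gives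
`(yᵀ u)² = ⟨x, u⟩² ≤ ⟨x, x⟩ ⟨u, u⟩`, with equality at `u = x`. So the admissible `λ²` are exactly
the positive reals `≥ yᵀ B y`, whose infimum is `yᵀ B y`.
-/

open Matrix

/-- `B` satisfies the four Penrose conditions for being the
Moore–Penrose pseudoinverse of `A`. -/
def IsMoorePenroseInv {n : ℕ} (A B : Matrix (Fin n) (Fin n) ℝ) : Prop :=
  A * B * A = A ∧ B * A * B = B ∧ (A * B)ᵀ = A * B ∧ (B * A)ᵀ = B * A

open Set

theorem csInf_Ioi_inter_Ici {α : Type*} [ConditionallyCompleteLinearOrder α] [DenselyOrdered α]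
    [NoMaxOrder α] {a b : α} (hab : a ≤ b) : sInf (Ioi a ∩ Ici b) = b := by
  rcases hab.eq_or_lt with rfl | hab
  · rw [inter_eq_left.2 Ioi_subset_Ici_self, csInf_Ioi]
  · rw [inter_eq_right.2 (Ici_subset_Ioi.2 hab), csInf_Ici]

namespace Matrix

theorem mulVec_mulVec_eq_self_of_forall_transpose_mulVec_eq_zero {m n R : Type*} [Fintype m]
    [Fintype n] [Field R] [LinearOrder R] [IsStrictOrderedRing R] {A : Matrix m n R}
    {B : Matrix n m R} (h₁ : A * B * A = A) (h₃ : (A * B)ᵀ = A * B) {y : m → R}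
    (hy : ∀ v, Aᵀ *ᵥ v = 0 → y ⬝ᵥ v = 0) : A *ᵥ (B *ᵥ y) = y := by
  set v := y - (A * B) *ᵥ y
  have hAv : Aᵀ *ᵥ v = 0 := by
    have : Aᵀ * (A * B) = Aᵀ := by rw [← h₃, ← transpose_mul, h₁]
    rw [mulVec_sub, mulVec_mulVec, this, sub_self]
  have hABv : (A * B) *ᵥ v = 0 := by
    have : A * B * (A * B) = A * B := by rw [← Matrix.mul_assoc, h₁]
    rw [mulVec_sub, mulVec_mulVec, this, sub_self]
  have hvv : v ⬝ᵥ v = 0 := by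
    rw [sub_dotProduct, hy v hAv, dotProduct_comm _ v, dotProduct_mulVec, ← mulVec_transpose, h₃,
      hABv, zero_dotProduct, sub_zero]
  rw [mulVec_mulVec, eq_comm, ← sub_eq_zero]
  exact dotProduct_self_eq_zero.1 hvv

variable {ι : Type*} {A : Matrix ι ι ℝ}

theorem PosSemidef.isSymm (hA : A.PosSemidef) : A.IsSymm :=
  isHermitian_iff_isSymm.1 hA.isHermitian

variable [Fintype ι]

theorem PosSemidef.dotProduct_mulVec_sq_le (hA : A.PosSemidef) (x u : ι → ℝ) :
    (x ⬝ᵥ A *ᵥ u) ^ 2 ≤ (x ⬝ᵥ A *ᵥ x) * (u ⬝ᵥ A *ᵥ u) := by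
  classical
  simpa only [toBilin'_apply'] using A.toBilin'.apply_sq_le_of_symm
    (fun v ↦ by simpa [toBilin'_apply'] using hA.dotProduct_mulVec_nonneg v)
    (LinearMap.BilinForm.isSymm_iff.1 <| isSymm_toBilin'_iff_isSymm.2 hA.isSymm) x u

theorem PosSemidef.forall_sq_dotProduct_le_mul_iff (hA : A.PosSemidef) {x y : ι → ℝ}
    (hxy : A *ᵥ x = y) {t : ℝ} (ht : 0 ≤ t) :
    (∀ u, (y ⬝ᵥ u) ^ 2 ≤ t * (u ⬝ᵥ A *ᵥ u)) ↔ y ⬝ᵥ x ≤ t := by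
  have hsymm (u : ι → ℝ) : y ⬝ᵥ u = x ⬝ᵥ A *ᵥ u := by
    rw [← hxy, dotProduct_mulVec, ← mulVec_transpose, hA.isSymm.eq, dotProduct_comm]
  have hc : y ⬝ᵥ x = x ⬝ᵥ A *ᵥ x := hsymm x
  have hc₀ : 0 ≤ y ⬝ᵥ x := by simpa [hc] using hA.dotProduct_mulVec_nonneg x
  refine ⟨fun h ↦ ?_, fun h u ↦ ?_⟩
  · have hx := h x
    rw [← hc] at hx
    rcases hc₀.eq_or_lt with hc₀ | hc₀
    · rwa [← hc₀]
    · nlinarith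
  · have hq : 0 ≤ u ⬝ᵥ A *ᵥ u := by simpa using hA.dotProduct_mulVec_nonneg u
    calc (y ⬝ᵥ u) ^ 2 ≤ (y ⬝ᵥ x) * (u ⬝ᵥ A *ᵥ u) := by
          rw [hsymm u, hc]; exact hA.dotProduct_mulVec_sq_le x u
      _ ≤ t * (u ⬝ᵥ A *ᵥ u) := mul_le_mul_of_nonneg_right h hq

end Matrix

theorem stmt_0 {n : ℕ} (A B : Matrix (Fin n) (Fin n) ℝ)
    (hA : A.PosSemidef) (hB : IsMoorePenroseInv A B)
    (y : Fin n → ℝ) (hy : ∀ v : Fin n → ℝ, A.mulVec v = 0 → y ⬝ᵥ v = 0) :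
    y ⬝ᵥ B.mulVec y =
      sInf {t : ℝ | ∃ lam : ℝ, 0 < lam ∧ t = lam ^ 2 ∧
        ∀ u : Fin n → ℝ, (y ⬝ᵥ u) ^ 2 ≤ lam ^ 2 * (u ⬝ᵥ A.mulVec u)} := by
  obtain ⟨h₁, -, h₃, -⟩ := hB
  have hxy : A *ᵥ (B *ᵥ y) = y :=
    mulVec_mulVec_eq_self_of_forall_transpose_mulVec_eq_zero h₁ h₃ (by rwa [hA.isSymm.eq])
  have hc₀ : 0 ≤ y ⬝ᵥ B *ᵥ y := by
    simpa [hxy, dotProduct_comm] using hA.dotProduct_mulVec_nonneg (B *ᵥ y)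
  have hS : {t : ℝ | ∃ lam : ℝ, 0 < lam ∧ t = lam ^ 2 ∧
      ∀ u : Fin n → ℝ, (y ⬝ᵥ u) ^ 2 ≤ lam ^ 2 * (u ⬝ᵥ A *ᵥ u)} = Ioi 0 ∩ Ici (y ⬝ᵥ B *ᵥ y) := by
    ext t
    constructor
    · rintro ⟨lam, hlam, rfl, h⟩
      exact ⟨pow_pos hlam 2, (hA.forall_sq_dotProduct_le_mul_iff hxy (by positivity)).1 h⟩
    · rintro ⟨ht, hc⟩
      refine ⟨√t, Real.sqrt_pos.2 ht, (Real.sq_sqrt ht.le).symm, ?_⟩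
      rw [Real.sq_sqrt ht.le]
      exact (hA.forall_sq_dotProduct_le_mul_iff hxy ht.le).2 hc
  rw [hS, csInf_Ioi_inter_Ici hc₀]
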